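/- There exists a constant c₀ > 0 such that the formal power series φ(z) = c₀ ∑_{n≥0} zⁿ/(n²+1) satisfies φ² ≪ φ, i.e., every coefficient of the formal power series φ² is at most the corresponding coefficient of φ. -/

import Mathlib

/-! Since `(i + j)² + 1 ≤ 2 (i² + 1) + 2 (j² + 1)`, the convolution
`∑_{i+j=n} 1/((i² + 1)(j² + 1))` is at most `4 S/(n² + 1)` with `S = ∑ₖ 1/(k² + 1)`,
so `φ² ≪ φ` as soon as `c₀ ≤ 1/(4 S)`. -/

open PowerSeries Finset

theorem PowerSeries.abs_coeff_sq_mk_le_of_sum_antidiagonal_le {b : ℕ → ℝ} {K c : ℝ} {n : ℕ}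
    (hb : ∀ k, 0 ≤ b k) (hc : 0 ≤ c) (hcK : c * K ≤ 1)
    (hconv : ∑ p ∈ antidiagonal n, b p.1 * b p.2 ≤ K * b n) :
    |coeff n ((mk fun k => c * b k) ^ 2)| ≤ coeff n (mk fun k => c * b k) := by
  have hcoeff : coeff n ((mk fun k => c * b k) ^ 2) =
      c ^ 2 * ∑ p ∈ antidiagonal n, b p.1 * b p.2 := by
    rw [sq, coeff_mul, mul_sum]
    simp only [coeff_mk]
    exact sum_congr rfl fun _ _ => by ring
  have hsum : 0 ≤ ∑ p ∈ antidiagonal n, b p.1 * b p.2 :=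
    sum_nonneg fun p _ => mul_nonneg (hb p.1) (hb p.2)
  rw [hcoeff, coeff_mk, abs_of_nonneg (by positivity)]
  calc c ^ 2 * ∑ p ∈ antidiagonal n, b p.1 * b p.2
      ≤ c ^ 2 * (K * b n) := by gcongr
    _ = c * (c * K) * b n := by ring
    _ ≤ c * b n := by
        gcongr
        · exact hb n
        · exact mul_le_of_le_one_right hc hcK

theorem inv_sq_add_one_mul_inv_le (x y : ℝ) :
    (x ^ 2 + 1)⁻¹ * (y ^ 2 + 1)⁻¹ ≤
      2 * ((x + y) ^ 2 + 1)⁻¹ * ((x ^ 2 + 1)⁻¹ + (y ^ 2 + 1)⁻¹) := by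
  field_simp
  nlinarith [sq_nonneg (x - y)]

theorem summable_inv_sq_add_one : Summable fun k : ℕ => ((k : ℝ) ^ 2 + 1)⁻¹ := by
  refine (Real.summable_nat_pow_inv.mpr one_lt_two).of_norm_bounded_eventually_nat ?_
  filter_upwards [Filter.eventually_gt_atTop 0] with k hk
  rw [Real.norm_of_nonneg (by positivity)]
  gcongr
  linarith

theorem sum_antidiagonal_inv_sq_add_one_mul_le (n : ℕ) :
    ∑ p ∈ antidiagonal n, ((p.1 : ℝ) ^ 2 + 1)⁻¹ * ((p.2 : ℝ) ^ 2 + 1)⁻¹ ≤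
      4 * (∑' k : ℕ, ((k : ℝ) ^ 2 + 1)⁻¹) * ((n : ℝ) ^ 2 + 1)⁻¹ := by
  set f : ℕ → ℝ := fun k => ((k : ℝ) ^ 2 + 1)⁻¹
  have hfst : ∑ p ∈ antidiagonal n, f p.1 = ∑ k ∈ range (n + 1), f k :=
    Nat.sum_antidiagonal_eq_sum_range_succ (fun i _ => f i) n
  have hsnd : ∑ p ∈ antidiagonal n, f p.2 = ∑ k ∈ range (n + 1), f k := by
    rw [← Nat.sum_antidiagonal_swap]; exact hfst
  calc ∑ p ∈ antidiagonal n, f p.1 * f p.2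
      ≤ ∑ p ∈ antidiagonal n, 2 * f n * (f p.1 + f p.2) := by
        refine sum_le_sum fun p hp => ?_
        have hn : (n : ℝ) = p.1 + p.2 := by exact_mod_cast (mem_antidiagonal.mp hp).symm
        simpa only [f, hn] using inv_sq_add_one_mul_inv_le p.1 p.2
    _ = 4 * f n * ∑ k ∈ range (n + 1), f k := by
        rw [← mul_sum, sum_add_distrib, hfst, hsnd]; ring
    _ ≤ 4 * (∑' k, f k) * f n := by
        rw [mul_right_comm]
        gcongr
        exact summable_inv_sq_add_one.sum_le_tsum _ fun k _ => by positivity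

/-- There is `c₀ > 0` such that the power series `φ(z) = c₀ ∑ zⁿ/(n²+1)`
satisfies `φ² ≪ φ`, i.e. every coefficient of `φ²` is bounded in absolute value by the
corresponding coefficient of `φ`. -/
theorem exists_c0_sq_majorized :
    ∃ c₀ : ℝ, 0 < c₀ ∧
      ∀ n : ℕ,
        |PowerSeries.coeff (R := ℝ) n ((PowerSeries.mk fun k => c₀ / ((k : ℝ) ^ 2 + 1)) ^ 2)|
          ≤ PowerSeries.coeff (R := ℝ) n (PowerSeries.mk fun k => c₀ / ((k : ℝ) ^ 2 + 1)) := by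
  set S := ∑' k : ℕ, ((k : ℝ) ^ 2 + 1)⁻¹
  have hS : 0 < S := summable_inv_sq_add_one.tsum_pos (fun _ => by positivity) 0 (by norm_num)
  refine ⟨(4 * S)⁻¹, by positivity, fun n => ?_⟩
  simp only [div_eq_mul_inv]
  exact abs_coeff_sq_mk_le_of_sum_antidiagonal_le (fun _ => by positivity) (by positivity)
    (inv_mul_cancel₀ (by positivity)).le (sum_antidiagonal_inv_sq_add_one_mul_le n)
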